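/- Let X be a non-reflexive real Banach space and T(x, x*) = (-x*, J(x)). Then the family of monotone subsets of (X** × X***) × (X* × X**) containing the (canonically embedded) graph of T has infinitely many distinct maximal elements. More precisely, for each t > 0 there is a maximal monotone operator B_t : X** × X*** ⇉ X* × X** whose graph contains graph(T) ∪ {(p_t, q_t)}, and B_t ≠ B_s whenever t ≠ s. -/

import Mathlib

namespace NormedSpace

/-- The topological dual of a seminormed space `E` (the former `NormedSpace.Dual`,
removed from Mathlib), with its old definition. -/
abbrev Dual (𝕜 : Type*) [NontriviallyNormedField 𝕜] (E : Type*) [SeminormedAddCommGroup E]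
    [NormedSpace 𝕜 E] : Type _ :=
  E →L[𝕜] 𝕜

end NormedSpace

open NormedSpace

/-!
The graph of `T` is embedded in `(X** × X***) × (X* × X**)` as a set on which the monotonicity
gap vanishes identically, and `w₀` is chosen so that the gap between any graph point and
`(p_t, q_t)` is `w₀ x₀ = 1`. Hence each seed `graph(T) ∪ {(p_t, q_t)}` is monotone and Zorn's
lemma extends it to a maximal monotone set `B_t`. The gap between `(p_s, q_s)` and `(p_t, q_t)`
is `(1/s - 1/t)(s - t) < 0` for `s ≠ t`, so no monotone set contains both, and `B_s ≠ B_t`.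
-/

theorem exists_maximal_superset_of_forall_rel {α : Type*} (R : α → α → Prop) {A : Set α}
    (hA : ∀ p q, p ∈ A → q ∈ A → R p q) :
    ∃ M, A ⊆ M ∧ (∀ p q, p ∈ M → q ∈ M → R p q) ∧
      ∀ N, (∀ p q, p ∈ N → q ∈ N → R p q) → M ⊆ N → N = M := by
  obtain ⟨M, hAM, hM⟩ := zorn_subset_nonempty {M | ∀ p q, p ∈ M → q ∈ M → R p q}
    (fun c hc hchain _ => ⟨⋃₀ c, fun p q ⟨a, ha, hpa⟩ ⟨b, hb, hqb⟩ =>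
      (hchain.total ha hb).elim (fun hab => hc hb p q (hab hpa) hqb)
        (fun hba => hc ha p q hpa (hba hqb)),
      fun _ => Set.subset_sUnion_of_mem⟩) A hA
  exact ⟨M, hAM, hM.prop, fun N hN hMN => (hM.eq_of_subset hN hMN).symm⟩

section Gap

variable {E F : Type*} [SeminormedAddCommGroup E] [NormedSpace ℝ E]
  [SeminormedAddCommGroup F] [NormedSpace ℝ F]

noncomputable def monotonicityGap (p q : (Dual ℝ E × Dual ℝ F) × (E × F)) : ℝ :=
  (p.1.1 - q.1.1) (p.2.1 - q.2.1) + (p.1.2 - q.1.2) (p.2.2 - q.2.2)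

theorem monotonicityGap_comm (p q : (Dual ℝ E × Dual ℝ F) × (E × F)) :
    monotonicityGap p q = monotonicityGap q p := by
  simp only [monotonicityGap, sub_apply, map_sub]
  ring

end Gap

noncomputable section Construction

variable {X : Type*} [NormedAddCommGroup X] [NormedSpace ℝ X]

def graphPoint (x : X) (x' : Dual ℝ X) :
    (Dual ℝ (Dual ℝ X) × Dual ℝ (Dual ℝ (Dual ℝ X))) × (Dual ℝ X × Dual ℝ (Dual ℝ X)) :=
  ((inclusionInDoubleDual ℝ X x, inclusionInDoubleDual ℝ (Dual ℝ X) x'),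
    (-x', inclusionInDoubleDual ℝ X x))

def extraPoint (x₀ : Dual ℝ (Dual ℝ X)) (w₀ : Dual ℝ (Dual ℝ (Dual ℝ X))) (t : ℝ) :
    (Dual ℝ (Dual ℝ X) × Dual ℝ (Dual ℝ (Dual ℝ X))) × (Dual ℝ X × Dual ℝ (Dual ℝ X)) :=
  ((t • x₀, (1/t) • w₀), ((0 : Dual ℝ X), t • x₀))

theorem monotonicityGap_graphPoint (x y : X) (x' y' : Dual ℝ X) :
    monotonicityGap (graphPoint x x') (graphPoint y y') = 0 := by
  simp only [monotonicityGap, graphPoint, sub_apply,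
    neg_apply, dual_def, map_sub]
  ring

theorem monotonicityGap_graphPoint_extraPoint {x₀ : Dual ℝ (Dual ℝ X)}
    {w₀ : Dual ℝ (Dual ℝ (Dual ℝ X))} (h1 : w₀ x₀ = 1)
    (h0 : ∀ x : X, w₀ (inclusionInDoubleDual ℝ X x) = 0) (x : X) (x' : Dual ℝ X) (t : ℝ) :
    monotonicityGap (graphPoint x x') (extraPoint x₀ w₀ t) = 1 / t * t := by
  simp only [monotonicityGap, graphPoint, extraPoint, sub_apply, smul_apply, dual_def, map_sub,
    map_smul, map_neg, smul_eq_mul, sub_zero, h0, h1]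
  ring

theorem monotonicityGap_extraPoint {x₀ : Dual ℝ (Dual ℝ X)}
    {w₀ : Dual ℝ (Dual ℝ (Dual ℝ X))} (h1 : w₀ x₀ = 1) (s t : ℝ) :
    monotonicityGap (extraPoint x₀ w₀ s) (extraPoint x₀ w₀ t) = (1 / s - 1 / t) * (s - t) := by
  simp only [monotonicityGap, extraPoint, sub_apply,
    smul_apply, map_sub, map_smul, smul_eq_mul, sub_self, map_zero, h1]
  ring

theorem monotonicityGap_extraPoint_neg {x₀ : Dual ℝ (Dual ℝ X)}
    {w₀ : Dual ℝ (Dual ℝ (Dual ℝ X))} (h1 : w₀ x₀ = 1) {s t : ℝ} (hs : 0 < s) (ht : 0 < t)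
    (hst : s ≠ t) : monotonicityGap (extraPoint x₀ w₀ s) (extraPoint x₀ w₀ t) < 0 := by
  have hsq : 0 < (s - t) ^ 2 := pow_two_pos_of_ne_zero (sub_ne_zero.mpr hst)
  calc monotonicityGap (extraPoint x₀ w₀ s) (extraPoint x₀ w₀ t)
      = -(s - t) ^ 2 / (s * t) := by
        rw [monotonicityGap_extraPoint h1]
        field_simp
        ring
    _ < 0 := div_neg_of_neg_of_pos (neg_neg_of_pos hsq) (mul_pos hs ht)

def monotoneSeed (x₀ : Dual ℝ (Dual ℝ X)) (w₀ : Dual ℝ (Dual ℝ (Dual ℝ X))) (t : ℝ) :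
    Set ((Dual ℝ (Dual ℝ X) × Dual ℝ (Dual ℝ (Dual ℝ X))) × (Dual ℝ X × Dual ℝ (Dual ℝ X))) :=
  insert (extraPoint x₀ w₀ t) (Set.range fun z : X × Dual ℝ X => graphPoint z.1 z.2)

theorem monotonicityGap_nonneg_of_mem_monotoneSeed {x₀ : Dual ℝ (Dual ℝ X)}
    {w₀ : Dual ℝ (Dual ℝ (Dual ℝ X))} (h1 : w₀ x₀ = 1)
    (h0 : ∀ x : X, w₀ (inclusionInDoubleDual ℝ X x) = 0) (t : ℝ) :
    ∀ p q, p ∈ monotoneSeed x₀ w₀ t → q ∈ monotoneSeed x₀ w₀ t → 0 ≤ monotonicityGap p q := by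
  have hgap : ∀ x x', 0 ≤ monotonicityGap (graphPoint x x') (extraPoint x₀ w₀ t) := fun x x' => by
    rw [monotonicityGap_graphPoint_extraPoint h1 h0]
    rcases eq_or_ne t 0 with rfl | ht
    · simp
    · rw [one_div_mul_cancel ht]
      exact zero_le_one
  rintro p q (rfl | ⟨⟨x, x'⟩, rfl⟩) (rfl | ⟨⟨y, y'⟩, rfl⟩)
  · rw [monotonicityGap_extraPoint h1, sub_self, sub_self, mul_zero]
  · rw [monotonicityGap_comm]
    exact hgap y y'
  · exact hgap x x'
  · exact (monotonicityGap_graphPoint x y x' y').ge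

end Construction

theorem stmt10_general (X : Type*) [NormedAddCommGroup X] [NormedSpace ℝ X]
    (x₀ : Dual ℝ (Dual ℝ X)) (w₀ : Dual ℝ (Dual ℝ (Dual ℝ X)))
    (h1 : w₀ x₀ = 1) (h0 : ∀ x : X, w₀ (inclusionInDoubleDual ℝ X x) = 0) :
    ∃ B : ℝ → Set ((Dual ℝ (Dual ℝ X) × Dual ℝ (Dual ℝ (Dual ℝ X))) ×
        (Dual ℝ X × Dual ℝ (Dual ℝ X))),
      (∀ t : ℝ, 0 < t →
        -- `B t` is monotone
        (∀ p q, p ∈ B t → q ∈ B t →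
          0 ≤ (p.1.1 - q.1.1) (p.2.1 - q.2.1) + (p.1.2 - q.1.2) (p.2.2 - q.2.2)) ∧
        -- `B t` is maximal monotone
        (∀ M, (∀ p q, p ∈ M → q ∈ M →
            0 ≤ (p.1.1 - q.1.1) (p.2.1 - q.2.1) + (p.1.2 - q.1.2) (p.2.2 - q.2.2)) →
          B t ⊆ M → M = B t) ∧
        -- `B t` contains the embedded graph of `T`
        (∀ (x : X) (x' : Dual ℝ X),
          ((inclusionInDoubleDual ℝ X x, inclusionInDoubleDual ℝ (Dual ℝ X) x'),
            (-x', inclusionInDoubleDual ℝ X x)) ∈ B t) ∧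
        -- `B t` contains `(p_t, q_t)`
        ((t • x₀, (1/t) • w₀), ((0 : Dual ℝ X), t • x₀)) ∈ B t) ∧
      ∀ s t : ℝ, 0 < s → 0 < t → s ≠ t → B s ≠ B t := by
  choose B hseed hmono hmax using fun t =>
    exists_maximal_superset_of_forall_rel _ (monotonicityGap_nonneg_of_mem_monotoneSeed h1 h0 t)
  have hextra (t : ℝ) : extraPoint x₀ w₀ t ∈ B t := hseed t (Set.mem_insert _ _)
  refine ⟨B, fun t _ => ⟨hmono t, hmax t, fun x x' => hseed t ?_, hextra t⟩, ?_⟩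
  · exact Set.mem_insert_of_mem _ ⟨(x, x'), rfl⟩
  intro s t hs ht hst hB
  exact (monotonicityGap_extraPoint_neg h1 hs ht hst).not_ge
    (hmono t _ _ (hB ▸ hextra s) (hextra t))

/-- For each `t > 0` there is a maximal monotone subset `B t` of
`(X** × X***) × (X* × X**)` containing the embedded graph of `T` together with `(p_t, q_t)`,
and `B t ≠ B s` for `t ≠ s`; in particular the family of monotone sets containing the graph
of `T` has infinitely many distinct maximal elements. -/
theorem stmt10 (X : Type*) [NormedAddCommGroup X] [NormedSpace ℝ X] [CompleteSpace X]
    (x₀ : Dual ℝ (Dual ℝ X)) (w₀ : Dual ℝ (Dual ℝ (Dual ℝ X)))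
    (hx₀ : x₀ ∉ Set.range (inclusionInDoubleDual ℝ X))
    (h1 : w₀ x₀ = 1) (h0 : ∀ x : X, w₀ (inclusionInDoubleDual ℝ X x) = 0) :
    ∃ B : ℝ → Set ((Dual ℝ (Dual ℝ X) × Dual ℝ (Dual ℝ (Dual ℝ X))) ×
        (Dual ℝ X × Dual ℝ (Dual ℝ X))),
      (∀ t : ℝ, 0 < t →
        -- `B t` is monotone
        (∀ p q, p ∈ B t → q ∈ B t →
          0 ≤ (p.1.1 - q.1.1) (p.2.1 - q.2.1) + (p.1.2 - q.1.2) (p.2.2 - q.2.2)) ∧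
        -- `B t` is maximal monotone
        (∀ M, (∀ p q, p ∈ M → q ∈ M →
            0 ≤ (p.1.1 - q.1.1) (p.2.1 - q.2.1) + (p.1.2 - q.1.2) (p.2.2 - q.2.2)) →
          B t ⊆ M → M = B t) ∧
        -- `B t` contains the embedded graph of `T`
        (∀ (x : X) (x' : Dual ℝ X),
          ((inclusionInDoubleDual ℝ X x, inclusionInDoubleDual ℝ (Dual ℝ X) x'),
            (-x', inclusionInDoubleDual ℝ X x)) ∈ B t) ∧
        -- `B t` contains `(p_t, q_t)`
        ((t • x₀, (1/t) • w₀), ((0 : Dual ℝ X), t • x₀)) ∈ B t) ∧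
      ∀ s t : ℝ, 0 < s → 0 < t → s ≠ t → B s ≠ B t :=
  stmt10_general X x₀ w₀ h1 h0
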